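/- Every G-injective G-C*-algebra has the G-equivariant weak expectation property (G-WEP). More generally, if A is a G-C*-algebra such that there is a G-invariant C*-subalgebra C of the G-continuous part A**_c of the bidual A** with A ⊆ C and C G-injective, then A has the G-WEP. -/

import Mathlib

open Function

/-- A point-norm continuous action of a topological group `G` on a (non-unital) C⋆-algebra `A`
by ⋆-automorphisms. -/
structure GAct (G : Type) [Monoid G] [TopologicalSpace G]
    (A : Type) [NonUnitalCStarAlgebra A] : Type where
  act : G → A → A
  act_one : ∀ a, act 1 a = a
  act_mul : ∀ g h a, act (g * h) a = act g (act h a)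
  map_add : ∀ g a b, act g (a + b) = act g a + act g b
  map_smul : ∀ g (c : ℂ) a, act g (c • a) = c • act g a
  map_mul : ∀ g a b, act g (a * b) = act g a * act g b
  map_star : ∀ g a, act g (star a) = star (act g a)
  isometry : ∀ g a, ‖act g a‖ = ‖a‖
  cont : ∀ a, Continuous fun g => act g a

section maps

variable {G : Type} [Monoid G] [TopologicalSpace G]
variable {A B : Type} [NonUnitalCStarAlgebra A] [NonUnitalCStarAlgebra B]

/-- A contractive completely positive (ccp) map between C⋆-algebras:
linear, contractive, and positive at all matrix levels (where an element of a
C⋆-algebra is positive iff it is of the form `star y * y`). -/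
def IsCcp (φ : A → B) : Prop :=
  (∀ a b, φ (a + b) = φ a + φ b) ∧ (∀ (c : ℂ) (a : A), φ (c • a) = c • φ a) ∧
  (∀ a, ‖φ a‖ ≤ ‖a‖) ∧
  ∀ (n : ℕ) (M : Matrix (Fin n) (Fin n) A),
    (∃ N : Matrix (Fin n) (Fin n) A, M = star N * N) →
      ∃ N' : Matrix (Fin n) (Fin n) B, M.map φ = star N' * N'

/-- A ⋆-homomorphism, as a predicate on functions. -/
def IsStarHom (φ : A → B) : Prop :=
  (∀ a b, φ (a + b) = φ a + φ b) ∧ (∀ (c : ℂ) (a : A), φ (c • a) = c • φ a) ∧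
  (∀ a b, φ (a * b) = φ a * φ b) ∧ (∀ a, φ (star a) = star (φ a))

/-- Equivariance of a map with respect to given actions. -/
def Equivariant (α : GAct G A) (β : GAct G B) (φ : A → B) : Prop :=
  ∀ g a, φ (α.act g a) = β.act g (φ a)

/-- A `G`-equivariant injective ⋆-homomorphism (an equivariant embedding). -/
def IsGEmbedding (α : GAct G A) (β : GAct G B) (φ : A → B) : Prop :=
  IsStarHom φ ∧ Injective φ ∧ Equivariant α β φ

/-- A map `φ : A → B` is `G`-injective if it extends to an equivariant ccp map along every
equivariant embedding of `A` into another `G`-C⋆-algebra. -/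
def GInjectiveMap (α : GAct G A) (β : GAct G B) (φ : A → B) : Prop :=
  ∀ (C : Type) (_ : NonUnitalCStarAlgebra C) (γ : GAct G C) (ι : A → C),
    IsGEmbedding α γ ι →
    ∃ ψ : C → B, IsCcp ψ ∧ Equivariant γ β ψ ∧ ψ ∘ ι = φ

/-- A `G`-C⋆-algebra `B` is `G`-injective if every equivariant ccp map into it is
`G`-injective. -/
def GInjectiveAlg (β : GAct G B) : Prop :=
  ∀ (A' : Type) (_ : NonUnitalCStarAlgebra A') (α : GAct G A') (φ : A' → B),
    IsCcp φ → Equivariant α β φ → GInjectiveMap α β φ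

/-- Membership in the algebraic crossed product `C_c(G,A)`: continuous compactly
supported `A`-valued functions on `G`. -/
def CcFun (f : G → A) : Prop :=
  Continuous f ∧ HasCompactSupport f

end maps

section norms

variable (G : Type) [Monoid G] [TopologicalSpace G]

/-- The type of assignments of a crossed-product norm (such as `‖·‖_max` or `‖·‖_r`) to every
`G`-C⋆-algebra; the norm is recorded as a function on all of `G → A`, thought of as restricted
to `C_c(G,A)`. -/
abbrev CPNorm : Type 1 :=
  ∀ (A : Type) [_inst : NonUnitalCStarAlgebra A], GAct G A → (G → A) → ℝ

variable {G}

/-- Functoriality of a crossed-product norm assignment for equivariant ccp maps: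
an equivariant ccp map `ψ` induces a contraction on crossed products.  This is the
characteristic property of the maximal crossed product (functoriality for ccp maps)
which is used throughout the construction of the maximal injective crossed product. -/
def CcpFunctorial (N : CPNorm G) : Prop :=
  ∀ (A : Type) (_ : NonUnitalCStarAlgebra A) (B : Type) (_ : NonUnitalCStarAlgebra B)
    (α : GAct G A) (β : GAct G B) (ψ : A → B), IsCcp ψ → Equivariant α β ψ →
    ∀ f : G → A, CcFun f → N B β (ψ ∘ f) ≤ N A α f

/-- The injective crossed-product norm associated to a given (maximal) crossed-product
norm assignment: the infimum over all equivariant embeddings `ι : A → B` of the norm of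
the image of `f ∈ C_c(G,A)` in `B ⋊_max G`. -/
noncomputable def injNorm (maxN : CPNorm G) (A : Type) [NonUnitalCStarAlgebra A]
    (α : GAct G A) (f : G → A) : ℝ :=
  sInf { r : ℝ | ∃ (B : Type) (_ : NonUnitalCStarAlgebra B) (β : GAct G B) (ι : A → B),
    IsGEmbedding α β ι ∧ r = maxN B β (ι ∘ f) }

end norms

section ccp

variable {G : Type} [Monoid G] [TopologicalSpace G]
variable {A B C : Type} [NonUnitalCStarAlgebra A] [NonUnitalCStarAlgebra B]
  [NonUnitalCStarAlgebra C]

noncomputable def IsStarHom.toNonUnitalStarAlgHom {φ : A → B} (h : IsStarHom φ) :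
    A →⋆ₙₐ[ℂ] B where
  toFun := φ
  map_add' := h.1
  map_smul' := h.2.1
  map_mul' := h.2.2.1
  map_star' := h.2.2.2
  map_zero' := (AddMonoidHom.mk' φ h.1).map_zero

lemma IsStarHom.isCcp {φ : A → B} (h : IsStarHom φ) : IsCcp φ := by
  let f := h.toNonUnitalStarAlgHom
  refine ⟨h.1, h.2.1, NonUnitalStarAlgHom.norm_apply_le f, ?_⟩
  rintro n M ⟨N, rfl⟩
  refine ⟨N.map f, ?_⟩
  change (star N * N).map f = _
  rw [Matrix.map_mul, Matrix.star_eq_conjTranspose, Matrix.star_eq_conjTranspose,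
    Matrix.conjTranspose_map f (fun a => map_star f a)]

lemma IsCcp.comp {φ : A → B} {ψ : B → C} (hψ : IsCcp ψ) (hφ : IsCcp φ) : IsCcp (ψ ∘ φ) := by
  obtain ⟨hφ_add, hφ_smul, hφ_norm, hφ_pos⟩ := hφ
  obtain ⟨hψ_add, hψ_smul, hψ_norm, hψ_pos⟩ := hψ
  refine ⟨fun a b => by simp [hφ_add, hψ_add], fun c a => by simp [hφ_smul, hψ_smul],
    fun a => (hψ_norm _).trans (hφ_norm a), fun n M hM => ?_⟩
  obtain ⟨N, hN⟩ := hψ_pos n (M.map φ) (hφ_pos n M hM)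
  exact ⟨N, by rw [← Matrix.map_map, hN]⟩

lemma Equivariant.comp {α : GAct G A} {β : GAct G B} {γ : GAct G C} {φ : A → B} {ψ : B → C}
    (hψ : Equivariant β γ ψ) (hφ : Equivariant α β φ) : Equivariant α γ (ψ ∘ φ) :=
  fun g a => by simp only [comp_apply, hφ g a, hψ g (φ a)]

end ccp

/-- `W` plays the role of `A**_c` with its canonical embedding `e`, and the `G`-injective
subalgebra `C` of the paper is the image of the embedding `m : D → W`. -/
theorem gwep_of_G_injective_subalgebra_general
    {G : Type} [Group G] [TopologicalSpace G]
    {A W D : Type} [NonUnitalCStarAlgebra A] [NonUnitalCStarAlgebra W]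
    [NonUnitalCStarAlgebra D]
    (α : GAct G A) (ω : GAct G W) (δ : GAct G D)
    (e : A → W)
    (i : A → D) (hi : IsGEmbedding α δ i)
    (hD : GInjectiveAlg δ)
    (m : D → W) (hm : IsGEmbedding δ ω m) (hme : m ∘ i = e) :
    ∀ (B : Type) (_ : NonUnitalCStarAlgebra B) (β : GAct G B) (ι : A → B),
      IsGEmbedding α β ι →
      ∃ p : B → W, IsCcp p ∧ Equivariant β ω p ∧ p ∘ ι = e := by
  intro B _ β ι hι
  obtain ⟨ψ, hψ, hψ_equiv, hψι⟩ := hD A _ α i hi.1.isCcp hi.2.2 B _ β ι hι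
  exact ⟨m ∘ ψ, hm.1.isCcp.comp hψ, hm.2.2.comp hψ_equiv, by rw [comp_assoc, hψι, hme]⟩

/-- Every `G`-injective `G`-C⋆-algebra has the `G`-equivariant weak
expectation property; more generally, if `A` is a `G`-C⋆-algebra which admits a `G`-invariant
C⋆-subalgebra `C` of the `G`-continuous part of the bidual `A**` with `A ⊆ C` and `C`
`G`-injective, then `A` has the `G`-WEP.  Here the bidual datum is abstracted as a
`G`-C⋆-algebra `W` (playing `A**_c`) with the canonical equivariant embedding `e : A → W`, and
the subalgebra `C` is the image of an equivariant embedding `m : D → W` of a `G`-injective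
algebra `D` with `m ∘ i = e` for an equivariant embedding `i : A → D`.  The `G`-WEP conclusion:
for every equivariant embedding `ι : A → B` there is an equivariant ccp map `p : B → W` with
`p ∘ ι = e`. -/
theorem gwep_of_G_injective_subalgebra
    {G : Type} [Group G] [TopologicalSpace G] [IsTopologicalGroup G] [LocallyCompactSpace G]
    {A W D : Type} [NonUnitalCStarAlgebra A] [NonUnitalCStarAlgebra W]
    [NonUnitalCStarAlgebra D]
    (α : GAct G A) (ω : GAct G W) (δ : GAct G D)
    (e : A → W) (he : IsGEmbedding α ω e)        -- the canonical inclusion `A → A**_c`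
    (i : A → D) (hi : IsGEmbedding α δ i)
    (hD : GInjectiveAlg δ)
    (m : D → W) (hm : IsGEmbedding δ ω m) (hme : m ∘ i = e) :
    ∀ (B : Type) (_ : NonUnitalCStarAlgebra B) (β : GAct G B) (ι : A → B),
      IsGEmbedding α β ι →
      ∃ p : B → W, IsCcp p ∧ Equivariant β ω p ∧ p ∘ ι = e :=
  gwep_of_G_injective_subalgebra_general α ω δ e i hi hD m hm hme
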